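/- arXiv:1709.05035 — 3 statements merged into one kernel-verified Lean document; each statement's English description precedes it below -/
import Mathlib

section
/- Let n ≥ 1, 0 ≤ i ≤ n, and let x ∈ ℝ^n with x ≠ 0. Let ψ(x) := I_n − 2 x xᵀ/|x|² (the orthogonal reflection matrix in the hyperplane normal to x). For any subsets I = {k_1 < ⋯ < k_i} and J = {k'_1 < ⋯ < k'_i} of {1, …, n} of cardinality i, the i×i minor determinant of ψ(x) with rows indexed by I and columns indexed by J satisfies det[(ψ(x))_{k_a, k'_b}]_{1 ≤ a,b ≤ i} = −S_{IJ}(x)/|x|². -/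
open Matrix Finset

section RankOne ------------------------------------------------------------
variable {m : ℕ} (A : Matrix (Fin m) (Fin m) ℝ) (u v : Fin m → ℝ)

private def Ms (s : Finset (Fin m)) : Matrix (Fin m) (Fin m) ℝ :=
  Matrix.of fun a b => A a b + if a ∈ s then u a * v b else 0

private lemma Ms_empty : Ms A u v ∅ = A := by
  ext a b; simp [Ms]

private lemma Ms_insert {s : Finset (Fin m)} {c : Fin m} (hc : c ∉ s) :
    Ms A u v (insert c s) = (Ms A u v s).updateRow c (Ms A u v s c + u c • v) := by
  ext a b
  by_cases hac : a = c
  · subst hac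
    simp [Ms, updateRow_self, hc]
  · simp [Ms, updateRow_ne hac, Finset.mem_insert, hac]

private lemma det_updateRow_Ms (s : Finset (Fin m)) (a : Fin m) (ha : a ∉ s) :
    ((Ms A u v s).updateRow a v).det = (A.updateRow a v).det := by
  induction s using Finset.induction_on with
  | empty => rw [Ms_empty]
  | @insert c s hcs ih =>
    have hca : c ≠ a := fun h => ha (h ▸ Finset.mem_insert_self c s)
    have has : a ∉ s := fun h => ha (Finset.mem_insert_of_mem h)
    have hcomm : ((Ms A u v s).updateRow c (Ms A u v s c + u c • v)).updateRow a v
        = ((Ms A u v s).updateRow a v).updateRow c (Ms A u v s c + u c • v) := by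
      ext i j
      simp only [updateRow_apply]
      rcases eq_or_ne i a with rfl | hia <;> rcases eq_or_ne i c with rfl | hic <;>
        simp_all
    rw [Ms_insert A u v hcs, hcomm]
    set N := (Ms A u v s).updateRow a v with hN
    have h1 : Ms A u v s c = N c := (updateRow_ne hca).symm
    have h2 : v = N a := (updateRow_self).symm
    have h3 : Ms A u v s c + u c • v = N c + u c • N a := by rw [← h1, ← h2]
    rw [h3, det_updateRow_add_smul_self N hca (u c)]
    exact ih has

private lemma det_Ms (s : Finset (Fin m)) :
    (Ms A u v s).det = A.det + ∑ a ∈ s, u a * (A.updateRow a v).det := by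
  induction s using Finset.induction_on with
  | empty => rw [Ms_empty, Finset.sum_empty, add_zero]
  | @insert c s hcs ih =>
    rw [Ms_insert A u v hcs, det_updateRow_add, det_updateRow_smul,
      updateRow_eq_self, ih, det_updateRow_Ms A u v s c hcs, Finset.sum_insert hcs]
    ring

lemma det_add_rank_one :
    (Matrix.of fun a b => A a b + u a * v b).det
      = A.det + ∑ a, u a * (A.updateRow a v).det := by
  have : (Matrix.of fun a b => A a b + u a * v b) = Ms A u v Finset.univ := by
    ext a b; simp [Ms]
  rw [this, det_Ms]

lemma det_updateRow_one (a : Fin m) :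
    ((1 : Matrix (Fin m) (Fin m) ℝ).updateRow a v).det = v a := by
  rw [← det_transpose]
  have ht : (updateRow (1 : Matrix (Fin m) (Fin m) ℝ) a v)ᵀ
      = updateCol (1 : Matrix (Fin m) (Fin m) ℝ) a v := by
    rw [← updateCol_transpose, transpose_one]
  rw [ht]
  have := Matrix.cramer_one (n := Fin m) (α := ℝ)
  calc ((1 : Matrix (Fin m) (Fin m) ℝ).updateCol a v).det
      = Matrix.cramer (1 : Matrix (Fin m) (Fin m) ℝ) v a := by rw [Matrix.cramer_apply]
    _ = v a := by rw [this]; rfl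

lemma det_updateRow_finsum {β : Type*} [DecidableEq β] (a : Fin m) (s : Finset β) (f : β → Fin m → ℝ) :
    (A.updateRow a (∑ b ∈ s, f b)).det = ∑ b ∈ s, (A.updateRow a (f b)).det := by
  induction s using Finset.induction_on with
  | empty =>
    rw [Finset.sum_empty, Finset.sum_empty]
    exact det_eq_zero_of_row_eq_zero a (by simp)
  | @insert c s hcs ih =>
    rw [Finset.sum_insert hcs, Finset.sum_insert hcs, det_updateRow_add, ih]

end RankOne

section OrderEmb ------------------------------------------------------------
variable {n : ℕ}

lemma sum_orderEmb {i : ℕ} (I : Finset (Fin n)) (hI : I.card = i) (f : Fin n → ℝ) :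
    ∑ a : Fin i, f (I.orderEmbOfFin hI a) = ∑ k ∈ I, f k := by
  rw [← Finset.sum_coe_sort I f]
  exact Fintype.sum_equiv (I.orderIsoOfFin hI).toEquiv _ _ (fun a => rfl)

lemma orderEmb_index {i : ℕ} (I : Finset (Fin n)) (hI : I.card = i) (p : Fin n) (hp : p ∈ I) :
    (((I.orderIsoOfFin hI).symm ⟨p, hp⟩ : Fin i) : ℕ) = (I.filter (· < p)).card := by
  set f := I.orderEmbOfFin hI with hf
  set a0 := (I.orderIsoOfFin hI).symm ⟨p, hp⟩ with ha0
  have hfa0 : f a0 = p := congrArg Subtype.val ((I.orderIsoOfFin hI).apply_symm_apply ⟨p, hp⟩)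
  have himg : I.filter (· < p) = (Finset.Iio a0).image f := by
    ext k
    simp only [mem_filter, mem_image, Finset.mem_Iio]
    constructor
    · rintro ⟨hk, hkp⟩
      obtain ⟨a, rfl⟩ : ∃ a, f a = k :=
        ⟨(I.orderIsoOfFin hI).symm ⟨k, hk⟩,
          congrArg Subtype.val ((I.orderIsoOfFin hI).apply_symm_apply ⟨k, hk⟩)⟩
      refine ⟨a, ?_, rfl⟩
      rw [← hfa0] at hkp
      exact f.strictMono.lt_iff_lt.mp hkp
    · rintro ⟨a, h, rfl⟩
      exact ⟨Finset.orderEmbOfFin_mem I hI a, hfa0 ▸ f.strictMono h⟩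
  rw [himg, Finset.card_image_of_injective _ f.injective, Fin.card_Iio]

lemma comp_succAbove_eq {m : ℕ} (I : Finset (Fin n)) (hI : I.card = m + 1) (p : Fin n)
    (hp : p ∈ I) (h' : (I.erase p).card = m) :
    (fun a : Fin m => I.orderEmbOfFin hI (((I.orderIsoOfFin hI).symm ⟨p, hp⟩).succAbove a))
      = (I.erase p).orderEmbOfFin h' := by
  set f := I.orderEmbOfFin hI with hf
  set a0 := (I.orderIsoOfFin hI).symm ⟨p, hp⟩ with ha0
  have hfa0 : f a0 = p := congrArg Subtype.val ((I.orderIsoOfFin hI).apply_symm_apply ⟨p, hp⟩)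
  apply Finset.orderEmbOfFin_unique
  · intro a
    rw [Finset.mem_erase]
    refine ⟨?_, Finset.orderEmbOfFin_mem I hI _⟩
    intro hEq
    exact Fin.succAbove_ne a0 a (f.injective (hEq.trans hfa0.symm))
  · exact f.strictMono.comp (Fin.strictMono_succAbove a0)

lemma erase_eq_erase {I J : Finset (Fin n)} {p q : Fin n} (hIJ : I \ J = {p})
    (hJI : J \ I = {q}) : I.erase p = J.erase q := by
  have h1 : ∀ k, k ∈ I → k ∉ J → k = p := fun k hk hk' => by
    have : k ∈ I \ J := Finset.mem_sdiff.mpr ⟨hk, hk'⟩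
    rwa [hIJ, Finset.mem_singleton] at this
  have h2 : ∀ k, k ∈ J → k ∉ I → k = q := fun k hk hk' => by
    have : k ∈ J \ I := Finset.mem_sdiff.mpr ⟨hk, hk'⟩
    rwa [hJI, Finset.mem_singleton] at this
  have hqI : q ∉ I := (Finset.mem_sdiff.mp (hJI ▸ Finset.mem_singleton_self q)).2
  have hpJ : p ∉ J := (Finset.mem_sdiff.mp (hIJ ▸ Finset.mem_singleton_self p)).2
  ext k
  simp only [Finset.mem_erase]
  constructor
  · rintro ⟨hkp, hk⟩
    by_cases hkJ : k ∈ J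
    · exact ⟨fun h => hqI (h ▸ hk), hkJ⟩
    · exact absurd (h1 k hk hkJ) hkp
  · rintro ⟨hkq, hk⟩
    by_cases hkI : k ∈ I
    · exact ⟨fun h => hpJ (h ▸ hk), hkI⟩
    · exact absurd (h2 k hk hkI) hkq

lemma parity_aux (K : Finset (Fin n)) {p q : Fin n} (hp : p ∉ K) (hpq : p < q) :
    (K.filter (· < q)).card
      = (K.filter (· < p)).card + (K.filter (fun r => p < r ∧ r < q)).card := by
  have hsplit : K.filter (· < q) = K.filter (· < p) ∪ K.filter (fun r => p < r ∧ r < q) := by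
    ext r
    simp only [mem_filter, mem_union]
    constructor
    · rintro ⟨hr, hrq⟩
      rcases lt_trichotomy r p with h | rfl | h
      · exact Or.inl ⟨hr, h⟩
      · exact absurd hr hp
      · exact Or.inr ⟨hr, h, hrq⟩
    · rintro (⟨hr, h⟩ | ⟨hr, h1, h2⟩)
      · exact ⟨hr, h.trans hpq⟩
      · exact ⟨hr, h2⟩
  rw [hsplit, Finset.card_union_of_disjoint]
  rw [Finset.disjoint_filter]
  rintro r - hrp ⟨hpr, -⟩
  exact absurd (hrp.trans hpr) (lt_irrefl r)

lemma parity_eq (K : Finset (Fin n)) {p q : Fin n} (hp : p ∉ K) (hq : q ∉ K) (hpq : p ≠ q) :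
    (-1 : ℝ) ^ ((K.filter (· < p)).card + (K.filter (· < q)).card)
      = (-1 : ℝ) ^ (K.filter (fun r => min p q < r ∧ r < max p q)).card := by
  rcases hpq.lt_or_gt with h | h
  · rw [parity_aux K hp h, min_eq_left h.le, max_eq_right h.le, ← add_assoc, ← two_mul,
      pow_add, pow_mul, neg_one_sq, one_pow, one_mul]
  · rw [parity_aux K hq h, min_eq_right h.le, max_eq_left h.le]
    rw [show (K.filter (· < q)).card + (K.filter (fun r => q < r ∧ r < p)).card
        + (K.filter (· < q)).card
      = 2 * (K.filter (· < q)).card + (K.filter (fun r => q < r ∧ r < p)).card by ring]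
    rw [pow_add, pow_mul, neg_one_sq, one_pow, one_mul]

end OrderEmb

/-- ε_I(k) = 1 if k ∈ I, −1 otherwise. -/
def epsSet {n : ℕ} (I : Finset (Fin n)) (k : Fin n) : ℝ := if k ∈ I then 1 else -1

/-- sgn(K; p, q) = (−1)^{#{r ∈ K : min(p,q) < r < max(p,q)}}. -/
def sgnPQ {n : ℕ} (K : Finset (Fin n)) (p q : Fin n) : ℝ :=
  (-1 : ℝ) ^ (K.filter (fun r => min p q < r ∧ r < max p q)).card

/-- The quadratic polynomial S_{IJ}(x):  Σ ε_I(k) x_k² if I = J;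
`2·sgn(I,J)·x_p x_q` if I, J differ by exactly one element (p ∈ I∖J, q ∈ J∖I,
sgn(I,J) = sgn(I∩J; p, q)); and 0 otherwise. -/
noncomputable def SIJ {n : ℕ} (I J : Finset (Fin n)) (x : Fin n → ℝ) : ℝ :=
  if I = J then ∑ k, epsSet I k * (x k) ^ 2
  else if h : (I \ J).card = 1 ∧ (J \ I).card = 1 then
    2 * sgnPQ (I ∩ J) ((I \ J).min' (Finset.card_pos.mp (by omega)))
        ((J \ I).min' (Finset.card_pos.mp (by omega)))
      * x ((I \ J).min' (Finset.card_pos.mp (by omega)))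
      * x ((J \ I).min' (Finset.card_pos.mp (by omega)))
  else 0

/-- The reflection matrix ψ(x) = I_n − 2 x xᵀ / |x|². -/
noncomputable def psiMat {n : ℕ} (x : Fin n → ℝ) : Matrix (Fin n) (Fin n) ℝ :=
  1 - (2 / (∑ k, (x k) ^ 2)) • Matrix.vecMulVec x x

open Matrix Finset in
lemma psiMat_apply {n : ℕ} (x : Fin n → ℝ) (p q : Fin n) :
    psiMat x p q = (if p = q then (1:ℝ) else 0) - (2 / (∑ k, (x k) ^ 2)) * (x p * x q) := by
  simp [psiMat, Matrix.sub_apply, Matrix.one_apply, Matrix.smul_apply, Matrix.vecMulVec_apply,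
    smul_eq_mul]

open Matrix Finset in
/-- The i×i minor of ψ(x) with rows indexed by I and columns by J (in increasing order)
equals −S_{IJ}(x)/|x|². -/
theorem stmt5 (n i : ℕ) (hn : 1 ≤ n) (hi : i ≤ n) (x : Fin n → ℝ) (hx : x ≠ 0)
    (I J : Finset (Fin n)) (hI : I.card = i) (hJ : J.card = i) :
    Matrix.det (Matrix.of fun a b : Fin i =>
        psiMat x ((I.orderIsoOfFin hI a : Fin n)) ((J.orderIsoOfFin hJ b : Fin n)))
      = -SIJ I J x / (∑ k, (x k) ^ 2) := by
  have hS2 : (0:ℝ) < ∑ k, (x k) ^ 2 := by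
    obtain ⟨k0, hk0⟩ : ∃ k, x k ≠ 0 := by
      by_contra h; push_neg at h; exact hx (funext h)
    exact Finset.sum_pos' (fun k _ => sq_nonneg _) ⟨k0, Finset.mem_univ _, by positivity⟩
  have hS2' : (∑ k, (x k) ^ 2) ≠ 0 := ne_of_gt hS2
  by_cases hIJeq : I = J
  · -- diagonal case
    subst hIJeq
    have hM : (Matrix.of fun a b : Fin i =>
          psiMat x ((I.orderIsoOfFin hI a : Fin n)) ((I.orderIsoOfFin hJ b : Fin n)))
        = Matrix.of (fun a b =>
            (1 : Matrix (Fin i) (Fin i) ℝ) a b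
            + (fun a' => -(2 / (∑ k, (x k)^2) * x (I.orderEmbOfFin hI a'))) a
              * (fun b' => x (I.orderEmbOfFin hI b')) b) := by
      ext a b
      simp only [Matrix.of_apply, coe_orderIsoOfFin_apply, psiMat_apply, Matrix.one_apply]
      have : I.orderEmbOfFin hJ = I.orderEmbOfFin hI := rfl
      rw [this]
      rcases eq_or_ne a b with rfl | hab
      · rw [if_pos rfl, if_pos rfl]; ring
      · rw [if_neg ((I.orderEmbOfFin hI).injective.ne hab), if_neg hab]; ring
    rw [hM, det_add_rank_one, det_one]
    have hsum : ∑ a : Fin i,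
        (fun a' => -(2 / (∑ k, (x k)^2) * x (I.orderEmbOfFin hI a'))) a
          * ((1 : Matrix (Fin i) (Fin i) ℝ).updateRow a
              (fun b' => x (I.orderEmbOfFin hI b'))).det
        = -(2 / (∑ k, (x k)^2)) * ∑ k ∈ I, (x k)^2 := by
      rw [show -(2 / (∑ k, (x k)^2)) * ∑ k ∈ I, (x k)^2
          = ∑ k ∈ I, -(2 / (∑ k', (x k')^2)) * (x k)^2 from by rw [Finset.mul_sum]]
      rw [← sum_orderEmb I hI (fun k => -(2 / (∑ k', (x k')^2)) * (x k)^2)]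
      refine Finset.sum_congr rfl fun a _ => ?_
      rw [det_updateRow_one]
      ring
    rw [hsum]
    have hSII : SIJ I I x = 2 * (∑ k ∈ I, (x k)^2) - ∑ k, (x k)^2 := by
      rw [SIJ, if_pos rfl]
      have h1 : ∀ k : Fin n, epsSet I k * (x k) ^ 2
          = (if k ∈ I then 2 * (x k)^2 else 0) - (x k)^2 := by
        intro k
        by_cases h : k ∈ I <;> simp [epsSet, h] <;> ring
      rw [Finset.sum_congr rfl (fun k _ => h1 k), Finset.sum_sub_distrib,
        Finset.sum_ite_mem, Finset.univ_inter, ← Finset.mul_sum]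
    rw [hSII]
    field_simp
    ring
  · -- off-diagonal cases
    have hdd : (I \ J).card = (J \ I).card := by
      have h1 := Finset.card_sdiff_add_card_inter I J
      have h2 := Finset.card_sdiff_add_card_inter J I
      rw [Finset.inter_comm] at h2
      omega
    have hdne : (I \ J).Nonempty := by
      rw [Finset.sdiff_nonempty]
      intro hsub
      exact hIJeq (Finset.eq_of_subset_of_card_le hsub (le_of_eq (hJ.trans hI.symm)))
    have hd1 : 1 ≤ (I \ J).card := Finset.card_pos.mpr hdne
    by_cases hdeq : (I \ J).card = 1
    · -- exactly one element differs
      have hdeq' : (J \ I).card = 1 := by omega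
      have hne2 : (J \ I).Nonempty := Finset.card_pos.mp (by omega)
      set p := (I \ J).min' hdne with hpdef
      set q := (J \ I).min' hne2 with hqdef
      have hpmem : p ∈ I \ J := Finset.min'_mem _ _
      have hqmem : q ∈ J \ I := Finset.min'_mem _ _
      have hpI : p ∈ I := (Finset.mem_sdiff.mp hpmem).1
      have hpJ : p ∉ J := (Finset.mem_sdiff.mp hpmem).2
      have hqJ : q ∈ J := (Finset.mem_sdiff.mp hqmem).1
      have hqI : q ∉ I := (Finset.mem_sdiff.mp hqmem).2
      have hIJs : I \ J = {p} := by
        obtain ⟨a, ha⟩ := Finset.card_eq_one.mp hdeq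
        rw [ha] at hpmem ⊢
        rw [Finset.mem_singleton] at hpmem
        rw [hpmem]
      have hJIs : J \ I = {q} := by
        obtain ⟨a, ha⟩ := Finset.card_eq_one.mp hdeq'
        rw [ha] at hqmem ⊢
        rw [Finset.mem_singleton] at hqmem
        rw [hqmem]
      have hpq : p ≠ q := fun h => hpJ (h ▸ hqJ)
      have hSIJval : SIJ I J x = 2 * sgnPQ (I ∩ J) p q * x p * x q := by
        rw [SIJ, if_neg hIJeq, dif_pos ⟨hdeq, hdeq'⟩]
      have h1i : 1 ≤ i := hI ▸ Finset.card_pos.mpr ⟨p, hpI⟩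
      obtain ⟨m, rfl⟩ : ∃ m, i = m + 1 := ⟨i - 1, by omega⟩
      set a0 := (I.orderIsoOfFin hI).symm ⟨p, hpI⟩ with ha0
      set b0 := (J.orderIsoOfFin hJ).symm ⟨q, hqJ⟩ with hb0
      have hfa0 : (I.orderEmbOfFin hI) a0 = p :=
        congrArg Subtype.val ((I.orderIsoOfFin hI).apply_symm_apply ⟨p, hpI⟩)
      have hfb0 : (J.orderEmbOfFin hJ) b0 = q :=
        congrArg Subtype.val ((J.orderIsoOfFin hJ).apply_symm_apply ⟨q, hqJ⟩)
      set AA : Matrix (Fin (m+1)) (Fin (m+1)) ℝ := Matrix.of fun a' b' =>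
        if (I.orderEmbOfFin hI a' : Fin n) = J.orderEmbOfFin hJ b' then (1:ℝ) else 0 with hAA
      set uu : Fin (m+1) → ℝ :=
        fun a' => -(2 / (∑ k, (x k)^2) * x (I.orderEmbOfFin hI a')) with huu
      set vv : Fin (m+1) → ℝ := fun b' => x (J.orderEmbOfFin hJ b') with hvv
      have hM : (Matrix.of fun a b : Fin (m+1) =>
            psiMat x ((I.orderIsoOfFin hI a : Fin n)) ((J.orderIsoOfFin hJ b : Fin n)))
          = Matrix.of (fun a b => AA a b + uu a * vv b) := by
        ext a b
        simp only [hAA, huu, hvv, Matrix.of_apply, Finset.coe_orderIsoOfFin_apply, psiMat_apply]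
        ring
      rw [hM, det_add_rank_one]
      have hrowA0 : ∀ b', AA a0 b' = 0 := by
        intro b'
        rw [hAA, Matrix.of_apply, if_neg]
        intro h
        apply hpJ
        rw [← hfa0, h]
        exact Finset.orderEmbOfFin_mem J hJ b'
      have hcolB0 : ∀ r, AA r b0 = 0 := by
        intro r
        rw [hAA, Matrix.of_apply, if_neg]
        intro h
        apply hqI
        rw [← hfb0, ← h]
        exact Finset.orderEmbOfFin_mem I hI r
      have hdetAA : AA.det = 0 := Matrix.det_eq_zero_of_row_eq_zero a0 hrowA0
      have hsum1 : ∑ a, uu a * (AA.updateRow a vv).det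
          = uu a0 * (AA.updateRow a0 vv).det := by
        apply Finset.sum_eq_single a0
        · intro a _ haa0
          have hz : (AA.updateRow a vv).det = 0 := by
            apply Matrix.det_eq_zero_of_row_eq_zero a0
            intro b'
            rw [Matrix.updateRow_apply, if_neg (Ne.symm haa0)]
            exact hrowA0 b'
          rw [hz, mul_zero]
        · intro h
          exact absurd (Finset.mem_univ a0) h
      -- the submatrix of E is the identity
      have hEI : (I.erase p).card = m := by rw [Finset.card_erase_of_mem hpI, hI]; omega
      have hEJ : (J.erase q).card = m := by rw [Finset.card_erase_of_mem hqJ, hJ]; omega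
      have hcomp : (fun a : Fin m => I.orderEmbOfFin hI (a0.succAbove a))
          = (fun b : Fin m => J.orderEmbOfFin hJ (b0.succAbove b)) := by
        rw [ha0, comp_succAbove_eq I hI p hpI hEI, hb0, comp_succAbove_eq J hJ q hqJ hEJ]
        have herase := erase_eq_erase hIJs hJIs
        apply Finset.orderEmbOfFin_unique
        · intro a
          rw [← herase]
          exact Finset.orderEmbOfFin_mem _ hEI a
        · exact ((I.erase p).orderEmbOfFin hEI).strictMono
      have hsub : (AA.updateRow a0 (Pi.single b0 (1:ℝ))).submatrix a0.succAbove b0.succAbove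
          = 1 := by
        ext a b
        rw [Matrix.submatrix_apply, Matrix.updateRow_apply, if_neg (Fin.succAbove_ne a0 a),
          hAA, Matrix.of_apply]
        have hca := congrFun hcomp a
        rw [hca]
        rcases eq_or_ne a b with rfl | hab
        · rw [if_pos rfl, Matrix.one_apply_eq]
        · rw [if_neg, Matrix.one_apply_ne hab]
          exact fun h => hab (Fin.succAbove_right_injective ((J.orderEmbOfFin hJ).injective h))
      have hdetE : (AA.updateRow a0 (Pi.single b0 (1:ℝ))).det
          = (-1:ℝ) ^ ((a0:ℕ) + (b0:ℕ)) := by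
        rw [Matrix.det_succ_row (AA.updateRow a0 (Pi.single b0 (1:ℝ))) a0]
        rw [Finset.sum_eq_single b0]
        · have h1 : (AA.updateRow a0 (Pi.single b0 (1:ℝ))) a0 b0 = 1 := by
            rw [Matrix.updateRow_self]
            exact Pi.single_eq_same b0 1
          rw [h1, hsub, Matrix.det_one, mul_one, mul_one]
        · intro j _ hj
          have h0 : (AA.updateRow a0 (Pi.single b0 (1:ℝ))) a0 j = 0 := by
            rw [Matrix.updateRow_self]
            exact Pi.single_eq_of_ne hj 1
          rw [h0, mul_zero, zero_mul]
        · intro h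
          exact absurd (Finset.mem_univ b0) h
      -- decompose vv into single columns
      have hvvsum : vv
          = ∑ b : Fin (m+1), x (J.orderEmbOfFin hJ b) • (Pi.single b 1 : Fin (m+1) → ℝ) := by
        funext k
        rw [Finset.sum_apply]
        rw [Finset.sum_eq_single k]
        · simp [hvv]
        · intro j _ hjk
          simp [Pi.single_eq_of_ne (Ne.symm hjk)]
        · intro h
          exact absurd (Finset.mem_univ k) h
      have hupdet : (AA.updateRow a0 vv).det = x q * (-1:ℝ) ^ ((a0:ℕ) + (b0:ℕ)) := by
        rw [hvvsum, det_updateRow_finsum]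
        rw [Finset.sum_eq_single b0]
        · rw [Matrix.det_updateRow_smul, hdetE, hfb0]
        · intro b _ hb
          have hz : (AA.updateRow a0 (Pi.single b (1:ℝ))).det = 0 := by
            apply Matrix.det_eq_zero_of_column_eq_zero b0
            intro r
            rw [Matrix.updateRow_apply]
            rcases eq_or_ne r a0 with rfl | hr
            · rw [if_pos rfl]
              exact Pi.single_eq_of_ne (Ne.symm hb) 1
            · rw [if_neg hr]
              exact hcolB0 r
          rw [Matrix.det_updateRow_smul, hz]
          simp
        · intro h
          exact absurd (Finset.mem_univ b0) h
      -- parity of the indices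
      have hpIJ : p ∉ I ∩ J := fun h => hpJ (Finset.mem_inter.mp h).2
      have hqIJ : q ∉ I ∩ J := fun h => hqI (Finset.mem_inter.mp h).1
      have hIf : I.filter (· < p) = (I ∩ J).filter (· < p) := by
        ext k
        simp only [Finset.mem_filter, Finset.mem_inter]
        constructor
        · rintro ⟨hk, hkp⟩
          refine ⟨⟨hk, ?_⟩, hkp⟩
          by_contra hkJ
          have hmem : k ∈ I \ J := Finset.mem_sdiff.mpr ⟨hk, hkJ⟩
          rw [hIJs, Finset.mem_singleton] at hmem
          exact absurd hmem (ne_of_lt hkp)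
        · rintro ⟨⟨hk, -⟩, hkp⟩
          exact ⟨hk, hkp⟩
      have hJf : J.filter (· < q) = (I ∩ J).filter (· < q) := by
        ext k
        simp only [Finset.mem_filter, Finset.mem_inter]
        constructor
        · rintro ⟨hk, hkq⟩
          refine ⟨⟨?_, hk⟩, hkq⟩
          by_contra hkI
          have hmem : k ∈ J \ I := Finset.mem_sdiff.mpr ⟨hk, hkI⟩
          rw [hJIs, Finset.mem_singleton] at hmem
          exact absurd hmem (ne_of_lt hkq)
        · rintro ⟨⟨-, hk⟩, hkq⟩
          exact ⟨hk, hkq⟩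
      have hpar : ((-1:ℝ)) ^ ((a0:ℕ) + (b0:ℕ)) = sgnPQ (I ∩ J) p q := by
        rw [ha0, hb0, orderEmb_index I hI p hpI, orderEmb_index J hJ q hqJ, hIf, hJf, sgnPQ]
        exact parity_eq (I ∩ J) hpIJ hqIJ hpq
      have huua0 : uu a0 = -(2 / (∑ k, (x k)^2) * x p) := by
        rw [huu]
        simp only []
        rw [hfa0]
      rw [hdetAA, hsum1, hupdet, huua0, hSIJval, ← hpar, zero_add, eq_div_iff hS2']
      field_simp
    · -- at least two elements differ : determinant is zero
      have h2le : 2 ≤ (I \ J).card := by omega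
      obtain ⟨p1, hp1, p2, hp2, hp12⟩ := Finset.one_lt_card.mp h2le
      have hp1I : p1 ∈ I := (Finset.mem_sdiff.mp hp1).1
      have hp1J : p1 ∉ J := (Finset.mem_sdiff.mp hp1).2
      have hp2I : p2 ∈ I := (Finset.mem_sdiff.mp hp2).1
      have hp2J : p2 ∉ J := (Finset.mem_sdiff.mp hp2).2
      have hSIJ0 : SIJ I J x = 0 := by
        rw [SIJ, if_neg hIJeq, dif_neg]
        rintro ⟨h1, -⟩
        omega
      rw [hSIJ0, neg_zero, zero_div]
      set M := Matrix.of (fun a b : Fin i =>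
        psiMat x ((I.orderIsoOfFin hI a : Fin n)) ((J.orderIsoOfFin hJ b : Fin n))) with hMdef
      set a1 := (I.orderIsoOfFin hI).symm ⟨p1, hp1I⟩ with ha1
      set a2 := (I.orderIsoOfFin hI).symm ⟨p2, hp2I⟩ with ha2
      have hfa1 : (I.orderEmbOfFin hI) a1 = p1 :=
        congrArg Subtype.val ((I.orderIsoOfFin hI).apply_symm_apply ⟨p1, hp1I⟩)
      have hfa2 : (I.orderEmbOfFin hI) a2 = p2 :=
        congrArg Subtype.val ((I.orderIsoOfFin hI).apply_symm_apply ⟨p2, hp2I⟩)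
      have ha12 : a1 ≠ a2 := by
        intro h
        exact hp12 (by rw [← hfa1, ← hfa2, h])
      have hrow : ∀ (a : Fin i), (I.orderEmbOfFin hI a) ∉ J → ∀ b,
          M a b = -(2 / (∑ k, (x k)^2)
            * (x (I.orderEmbOfFin hI a) * x (J.orderEmbOfFin hJ b))) := by
        intro a haJ b
        rw [hMdef]
        simp only [Matrix.of_apply, Finset.coe_orderIsoOfFin_apply, psiMat_apply]
        rw [if_neg, zero_sub]
        intro h
        exact haJ (h ▸ Finset.orderEmbOfFin_mem J hJ b)
      by_cases hxp1 : x p1 = 0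
      · apply det_eq_zero_of_row_eq_zero a1
        intro b
        rw [hrow a1 (hfa1 ▸ hp1J) b, hfa1, hxp1]
        ring
      · have key : x p1 * M.det = 0 := by
          have e1 : x p1 • M a2 = x p2 • M a1 := by
            funext b
            simp only [Pi.smul_apply, smul_eq_mul]
            rw [hrow a2 (hfa2 ▸ hp2J) b, hrow a1 (hfa1 ▸ hp1J) b, hfa1, hfa2]
            ring
          have hdup : (M.updateRow a2 (M a1)) a1 = (M.updateRow a2 (M a1)) a2 := by
            rw [Matrix.updateRow_ne ha12, Matrix.updateRow_self]
          calc x p1 * M.det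
              = (M.updateRow a2 (x p1 • M a2)).det := by
                rw [Matrix.det_updateRow_smul, Matrix.updateRow_eq_self]
            _ = (M.updateRow a2 (x p2 • M a1)).det := by rw [e1]
            _ = x p2 * (M.updateRow a2 (M a1)).det := by rw [Matrix.det_updateRow_smul]
            _ = 0 := by rw [Matrix.det_zero_of_row_eq ha12 hdup, mul_zero]
        exact (mul_eq_zero.mp key).resolve_left hxp1
end

section
/- Let n ≥ 1, let l ≥ 1 be an integer, and let I ⊆ {1, …, n} with #I = i. Then (Σ_{k=1}^n ε_I(k) x_k²)·(Δ^{l+1} δ) = 4(l+1)l·(Σ_{k=1}^n ε_I(k) ∂_k²)(Δ^{l−1} δ) + 2(l+1)(2i−n)·Δ^l δ as tempered distributions on ℝ^n. -/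
/-!
Write `Q = ∑ ε_k x_k²`, `E = ∑ ε_k x_k ∂_k` and `L = ∑ ε_k ∂_k²`. The Leibniz rule gives the
commutation relations `Δ(Q g) = Q Δg + 4 E g + 2(2i - n) g`, `Δ E = E Δ + 2 L` and `Δ L = L Δ`,
and iterating them,
`Δ^(m+1)(Q g) = Q Δ^(m+1) g + (m+1)(4 E + 2(2i - n)) Δ^m g + 4(m+1)m L Δ^(m-1) g`.
Pairing with `δ` evaluates at the origin, where `Q` and `E` vanish.
-/

/-- Partial derivative ∂_p of a complex-valued function on ℝ^n. -/
noncomputable def pd {n : ℕ} (p : Fin n) (f : (Fin n → ℝ) → ℂ) : (Fin n → ℝ) → ℂ :=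
  fun x => fderiv ℝ f x (Pi.single p 1)

/-- The Laplacian Δ = ∂_1² + ⋯ + ∂_n² on complex-valued functions on ℝ^n. -/
noncomputable def lap {n : ℕ} (f : (Fin n → ℝ) → ℂ) : (Fin n → ℝ) → ℂ :=
  fun x => ∑ j, pd j (pd j f) x

open scoped ContDiff

section

variable {n : ℕ}

lemma contDiff_pd {f : (Fin n → ℝ) → ℂ} (hf : ContDiff ℝ ∞ f) (p : Fin n) :
    ContDiff ℝ ∞ (pd p f) :=
  (ContinuousLinearMap.apply ℝ ℂ (Pi.single p 1)).contDiff.comp (hf.fderiv_right (by simp))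

lemma contDiff_lap {f : (Fin n → ℝ) → ℂ} (hf : ContDiff ℝ ∞ f) : ContDiff ℝ ∞ (lap f) :=
  ContDiff.sum fun j _ => contDiff_pd (contDiff_pd hf j) j

lemma contDiff_lap_iterate {f : (Fin n → ℝ) → ℂ} (hf : ContDiff ℝ ∞ f) (m : ℕ) :
    ContDiff ℝ ∞ (lap^[m] f) := by
  induction m with
  | zero => exact hf
  | succ m ih => rw [Function.iterate_succ_apply']; exact contDiff_lap ih

lemma pd_add {f g : (Fin n → ℝ) → ℂ} (hf : Differentiable ℝ f) (hg : Differentiable ℝ g)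
    (p : Fin n) : pd p (fun x => f x + g x) = fun x => pd p f x + pd p g x := by
  ext x
  simp [pd, fderiv_fun_add (hf x) (hg x)]

lemma pd_const_mul {f : (Fin n → ℝ) → ℂ} (hf : Differentiable ℝ f) (c : ℂ) (p : Fin n) :
    pd p (fun x => c * f x) = fun x => c * pd p f x := by
  ext x
  simp [pd, fderiv_const_mul (hf x) c]

lemma pd_sum {ι : Type*} (s : Finset ι) {F : ι → (Fin n → ℝ) → ℂ}
    (hF : ∀ j ∈ s, Differentiable ℝ (F j)) (p : Fin n) :
    pd p (fun x => ∑ j ∈ s, F j x) = fun x => ∑ j ∈ s, pd p (F j) x := by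
  ext x
  simp [pd, fderiv_fun_sum fun j hj => hF j hj x]

lemma pd_mul {f g : (Fin n → ℝ) → ℂ} (hf : Differentiable ℝ f) (hg : Differentiable ℝ g)
    (p : Fin n) : pd p (fun x => f x * g x) = fun x => pd p f x * g x + f x * pd p g x := by
  ext x
  simp [pd, fderiv_fun_mul (hf x) (hg x)]
  ring

lemma pd_pd_apply {f : (Fin n → ℝ) → ℂ} (hf : ContDiff ℝ ∞ f) (i j : Fin n) (x : Fin n → ℝ) :
    pd i (pd j f) x = fderiv ℝ (fderiv ℝ f) x (Pi.single i 1) (Pi.single j 1) := by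
  have hd : DifferentiableAt ℝ (fderiv ℝ f) x :=
    (hf.fderiv_right (m := ∞) (by simp)).differentiable (by simp) x
  change fderiv ℝ (fun y => fderiv ℝ f y (Pi.single j 1)) x (Pi.single i 1) = _
  simp [fderiv_clm_apply hd (differentiableAt_const _)]

lemma pd_comm {f : (Fin n → ℝ) → ℂ} (hf : ContDiff ℝ ∞ f) (i j : Fin n) :
    pd i (pd j f) = pd j (pd i f) := by
  ext x
  rw [pd_pd_apply hf, pd_pd_apply hf]
  exact hf.contDiffAt.isSymmSndFDerivAt (by simpa using ENat.LEInfty.out) _ _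

lemma lap_sum {ι : Type*} (s : Finset ι) {F : ι → (Fin n → ℝ) → ℂ}
    (hF : ∀ j ∈ s, ContDiff ℝ ∞ (F j)) :
    lap (fun x => ∑ j ∈ s, F j x) = fun x => ∑ j ∈ s, lap (F j) x := by
  ext x
  have h1 : ∀ p : Fin n, pd p (fun x => ∑ j ∈ s, F j x) = fun x => ∑ j ∈ s, pd p (F j) x :=
    pd_sum s fun j hj => (hF j hj).differentiable (by simp)
  have h2 : ∀ p : Fin n, pd p (fun x => ∑ j ∈ s, pd p (F j) x)
      = fun x => ∑ j ∈ s, pd p (pd p (F j)) x :=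
    fun p => pd_sum s (fun j hj => (contDiff_pd (hF j hj) p).differentiable (by simp)) p
  simp only [lap, h1, h2]
  exact Finset.sum_comm

lemma lap_add {f g : (Fin n → ℝ) → ℂ} (hf : ContDiff ℝ ∞ f) (hg : ContDiff ℝ ∞ g) :
    lap (fun x => f x + g x) = fun x => lap f x + lap g x := by
  simpa using lap_sum Finset.univ (F := ![f, g]) (by simp [Fin.forall_fin_two, hf, hg])

lemma lap_const_mul {f : (Fin n → ℝ) → ℂ} (hf : ContDiff ℝ ∞ f) (c : ℂ) :
    lap (fun x => c * f x) = fun x => c * lap f x := by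
  ext x
  simp only [lap, Finset.mul_sum, pd_const_mul (hf.differentiable (by simp)),
    pd_const_mul ((contDiff_pd hf _).differentiable (by simp))]

lemma pd_lap_comm {f : (Fin n → ℝ) → ℂ} (hf : ContDiff ℝ ∞ f) (k : Fin n) :
    pd k (lap f) = lap (pd k f) := by
  change pd k (fun x => ∑ j, pd j (pd j f) x) = _
  rw [pd_sum _ fun j _ => (contDiff_pd (contDiff_pd hf j) j).differentiable (by simp)]
  ext x
  simp only [lap, pd_comm (contDiff_pd hf _) k, pd_comm hf k]

lemma pd_lap_iterate_comm {f : (Fin n → ℝ) → ℂ} (hf : ContDiff ℝ ∞ f) (k : Fin n) (m : ℕ) :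
    pd k (lap^[m] f) = lap^[m] (pd k f) := by
  induction m with
  | zero => rfl
  | succ m ih =>
    rw [Function.iterate_succ_apply', Function.iterate_succ_apply',
      pd_lap_comm (contDiff_lap_iterate hf m), ih]

lemma lap_mul {f g : (Fin n → ℝ) → ℂ} (hf : ContDiff ℝ ∞ f) (hg : ContDiff ℝ ∞ g) :
    lap (fun x => f x * g x)
      = fun x => lap f x * g x + 2 * (∑ j, pd j f x * pd j g x) + f x * lap g x := by
  have hd : ∀ {u : (Fin n → ℝ) → ℂ}, ContDiff ℝ ∞ u → Differentiable ℝ u :=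
    fun hu => hu.differentiable (by simp)
  have hpd2 : ∀ j : Fin n, pd j (pd j fun x => f x * g x)
      = fun x => pd j (pd j f) x * g x + 2 * (pd j f x * pd j g x) + f x * pd j (pd j g) x := by
    intro j
    rw [pd_mul (hd hf) (hd hg), pd_add (hd ((contDiff_pd hf j).mul hg))
      (hd (hf.mul (contDiff_pd hg j))), pd_mul (hd (contDiff_pd hf j)) (hd hg),
      pd_mul (hd hf) (hd (contDiff_pd hg j))]
    ext x
    ring
  ext x
  simp only [lap, hpd2, Finset.sum_add_distrib, Finset.sum_mul, Finset.mul_sum]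

noncomputable def coord (k : Fin n) : (Fin n → ℝ) → ℂ := fun x => (x k : ℂ)

lemma coord_eq_ofRealCLM_comp_proj (k : Fin n) :
    coord k = Complex.ofRealCLM.comp (ContinuousLinearMap.proj (R := ℝ) (φ := fun _ => ℝ) k) :=
  rfl

lemma contDiff_coord (k : Fin n) : ContDiff ℝ ∞ (coord k) := by
  rw [coord_eq_ofRealCLM_comp_proj]
  exact ContinuousLinearMap.contDiff _

lemma pd_coord (j k : Fin n) : pd j (coord k) = fun _ => if k = j then 1 else 0 := by
  ext x
  rw [pd, coord_eq_ofRealCLM_comp_proj, ContinuousLinearMap.fderiv]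
  split_ifs with h <;> simp [h]

lemma pd_const (p : Fin n) (c : ℂ) : pd p (fun _ => c) = fun _ => 0 := by
  ext x
  simp [pd]

lemma lap_coord_mul {h : (Fin n → ℝ) → ℂ} (hh : ContDiff ℝ ∞ h) (k : Fin n) :
    lap (fun x => coord k x * h x) = fun x => 2 * pd k h x + coord k x * lap h x := by
  have hlap : lap (coord (n := n) k) = fun _ => 0 := by
    ext x
    simp [lap, pd_coord, pd_const]
  rw [lap_mul (contDiff_coord k) hh, hlap]
  ext x
  simp [pd_coord]

lemma sum_epsSet (I : Finset (Fin n)) :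
    ∑ k, ((epsSet I k : ℝ) : ℂ) = 2 * I.card - n := by
  have h : ∀ k, ((epsSet I k : ℝ) : ℂ) = 2 * (if k ∈ I then 1 else 0) - 1 := by
    intro k
    unfold epsSet
    split_ifs <;> norm_num
  simp [h, Finset.sum_sub_distrib, mul_comm]

noncomputable def quadForm (I : Finset (Fin n)) : (Fin n → ℝ) → ℂ :=
  fun x => ∑ k, ((epsSet I k : ℝ) : ℂ) * coord k x ^ 2

lemma contDiff_quadForm (I : Finset (Fin n)) : ContDiff ℝ ∞ (quadForm I) :=
  ContDiff.sum fun k _ => contDiff_const.mul ((contDiff_coord k).pow 2)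

lemma pd_quadForm (I : Finset (Fin n)) (j : Fin n) :
    pd j (quadForm I) = fun x => 2 * ((epsSet I j : ℝ) : ℂ) * coord j x := by
  have hd (k : Fin n) : Differentiable ℝ (coord k) := (contDiff_coord k).differentiable (by simp)
  have hterm (k : Fin n) : pd j (fun x => ((epsSet I k : ℝ) : ℂ) * coord k x ^ 2)
      = fun x => ((epsSet I k : ℝ) : ℂ) * (2 * pd j (coord k) x * coord k x) := by
    rw [pd_const_mul ((hd k).fun_pow 2)]
    simp only [sq, pd_mul (hd k) (hd k)]
    ext x
    ring
  unfold quadForm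
  rw [pd_sum _ fun k _ => ((hd k).fun_pow 2).const_mul _]
  ext x
  simp [hterm, pd_coord]
  ring

lemma lap_quadForm (I : Finset (Fin n)) :
    lap (quadForm I) = fun _ => 2 * (2 * (I.card : ℂ) - n) := by
  have hd (k : Fin n) : Differentiable ℝ (coord k) := (contDiff_coord k).differentiable (by simp)
  ext x
  simp [lap, pd_quadForm, pd_const_mul (hd _), pd_coord, ← sum_epsSet, Finset.mul_sum]

noncomputable def signedEuler (I : Finset (Fin n)) (g : (Fin n → ℝ) → ℂ) : (Fin n → ℝ) → ℂ :=
  fun x => ∑ k, ((epsSet I k : ℝ) : ℂ) * (coord k x * pd k g x)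

noncomputable def signedLap (I : Finset (Fin n)) (g : (Fin n → ℝ) → ℂ) : (Fin n → ℝ) → ℂ :=
  fun x => ∑ k, ((epsSet I k : ℝ) : ℂ) * pd k (pd k g) x

section SignedOperators

variable (I : Finset (Fin n)) {g : (Fin n → ℝ) → ℂ}

lemma contDiff_signedEuler (hg : ContDiff ℝ ∞ g) : ContDiff ℝ ∞ (signedEuler I g) :=
  ContDiff.sum fun k _ => contDiff_const.mul ((contDiff_coord k).mul (contDiff_pd hg k))

lemma contDiff_signedLap (hg : ContDiff ℝ ∞ g) : ContDiff ℝ ∞ (signedLap I g) :=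
  ContDiff.sum fun k _ => contDiff_const.mul (contDiff_pd (contDiff_pd hg k) k)

lemma lap_quadForm_mul (hg : ContDiff ℝ ∞ g) :
    lap (fun x => quadForm I x * g x) = fun x =>
      quadForm I x * lap g x + 4 * signedEuler I g x + 2 * (2 * I.card - n) * g x := by
  rw [lap_mul (contDiff_quadForm I) hg, lap_quadForm]
  ext x
  have hgrad : ∑ j, pd j (quadForm I) x * pd j g x = 2 * signedEuler I g x := by
    simp only [signedEuler, pd_quadForm, Finset.mul_sum]
    exact Finset.sum_congr rfl fun j _ => by ring
  rw [hgrad]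
  ring

lemma lap_signedEuler (hg : ContDiff ℝ ∞ g) :
    lap (signedEuler I g) = fun x => signedEuler I (lap g) x + 2 * signedLap I g x := by
  have hterm (k : Fin n) : ContDiff ℝ ∞ (fun x => coord k x * pd k g x) :=
    (contDiff_coord k).mul (contDiff_pd hg k)
  unfold signedEuler
  rw [lap_sum _ fun k _ => contDiff_const.mul (hterm k)]
  ext x
  simp only [lap_const_mul (hterm _), lap_coord_mul (contDiff_pd hg _), pd_lap_comm hg,
    signedLap, Finset.mul_sum, ← Finset.sum_add_distrib]
  exact Finset.sum_congr rfl fun k _ => by ring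

lemma lap_signedLap (hg : ContDiff ℝ ∞ g) : lap (signedLap I g) = signedLap I (lap g) := by
  have hterm (k : Fin n) : ContDiff ℝ ∞ (pd k (pd k g)) := contDiff_pd (contDiff_pd hg k) k
  unfold signedLap
  rw [lap_sum _ fun k _ => contDiff_const.mul (hterm k)]
  ext x
  simp only [lap_const_mul (hterm _), pd_lap_comm hg, pd_lap_comm (contDiff_pd hg _)]

lemma lap_iterate_succ_quadForm_mul (hg : ContDiff ℝ ∞ g) (m : ℕ) :
    lap^[m + 1] (fun x => quadForm I x * g x) = fun x =>
      quadForm I x * lap^[m + 1] g x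
        + (m + 1) * (4 * signedEuler I (lap^[m] g) x + 2 * (2 * I.card - n) * lap^[m] g x)
        + 4 * (m + 1) * m * signedLap I (lap^[m - 1] g) x := by
  induction m with
  | zero =>
    ext x
    simp only [zero_add, Function.iterate_one, Function.iterate_zero_apply, lap_quadForm_mul I hg]
    push_cast
    ring
  | succ m ih =>
    have hgm := contDiff_lap_iterate hg m
    have hA : ContDiff ℝ ∞ (fun x => quadForm I x * lap^[m + 1] g x) :=
      (contDiff_quadForm I).mul (contDiff_lap_iterate hg (m + 1))
    have hB : ContDiff ℝ ∞ (fun x => 4 * signedEuler I (lap^[m] g) x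
        + 2 * (2 * I.card - n) * lap^[m] g x) :=
      (contDiff_const.mul (contDiff_signedEuler I hgm)).add (contDiff_const.mul hgm)
    have hC := contDiff_signedLap I (contDiff_lap_iterate hg (m - 1))
    -- `m - 1` truncates at `m = 0`, where the factor `m` kills the term
    have hpred (x : Fin n → ℝ) :
        (m : ℂ) * signedLap I (lap (lap^[m - 1] g)) x = m * signedLap I (lap^[m] g) x := by
      cases m <;> simp [Function.iterate_succ_apply']
    rw [Function.iterate_succ_apply', ih, lap_add (hA.add (contDiff_const.mul hB))
      (contDiff_const.mul hC), lap_add hA (contDiff_const.mul hB), lap_const_mul hB,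
      lap_add (contDiff_const.mul (contDiff_signedEuler I hgm)) (contDiff_const.mul hgm),
      lap_const_mul (contDiff_signedEuler I hgm), lap_const_mul hgm, lap_const_mul hC,
      lap_quadForm_mul I (contDiff_lap_iterate hg (m + 1)), lap_signedEuler I hgm,
      lap_signedLap I (contDiff_lap_iterate hg (m - 1))]
    ext x
    simp only [Function.iterate_succ_apply', Nat.add_sub_cancel]
    push_cast
    linear_combination 4 * (↑m + 1) * hpred x

end SignedOperators

lemma quadForm_zero (I : Finset (Fin n)) : quadForm I 0 = 0 := by
  simp [quadForm, coord]

lemma signedEuler_zero (I : Finset (Fin n)) (g : (Fin n → ℝ) → ℂ) : signedEuler I g 0 = 0 := by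
  simp [signedEuler, coord]

end

theorem stmt6_general (n : ℕ) (l : ℕ) (i : ℕ)
    (I : Finset (Fin n)) (hI : I.card = i)
    (φ : SchwartzMap (Fin n → ℝ) ℂ) :
    lap^[l + 1] (fun y => ((∑ k, epsSet I k * (y k) ^ 2 : ℝ) : ℂ) * φ y) 0
      = 4 * ((l : ℂ) + 1) * (l : ℂ) *
          (∑ k, ((epsSet I k : ℝ) : ℂ) * lap^[l - 1] (pd k (pd k ⇑φ)) 0)
        + 2 * ((l : ℂ) + 1) * (2 * (i : ℂ) - (n : ℂ)) * lap^[l] ⇑φ 0 := by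
  have hφ : ContDiff ℝ ∞ φ := φ.smooth ⊤
  have hQ : (fun y => ((∑ k, epsSet I k * (y k) ^ 2 : ℝ) : ℂ) * φ y)
      = fun y => quadForm I y * φ y := by
    ext y
    simp [quadForm, coord]
  have hL : signedLap I (lap^[l - 1] φ) 0
      = ∑ k, ((epsSet I k : ℝ) : ℂ) * lap^[l - 1] (pd k (pd k φ)) 0 := by
    simp only [signedLap, pd_lap_iterate_comm hφ, pd_lap_iterate_comm (contDiff_pd hφ _)]
  rw [hQ, lap_iterate_succ_quadForm_mul I hφ, ← hL, ← hI]
  simp only [quadForm_zero, signedEuler_zero]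
  ring

/-- `(Σ_k ε_I(k) x_k²)·(Δ^{l+1} δ) = 4(l+1)l·(Σ_k ε_I(k) ∂_k²)(Δ^{l−1} δ)
      + 2(l+1)(2i−n)·Δ^l δ`
as tempered distributions on ℝ^n, tested against an arbitrary Schwartz function `φ`.
Here `(Δ^k δ)(ψ) = (Δ^k ψ)(0)`, `(p·T)(φ) = T(p φ)` and `(∂_k² T)(φ) = T(∂_k² φ)`. -/
theorem stmt6 (n : ℕ) (hn : 1 ≤ n) (l : ℕ) (hl : 1 ≤ l) (i : ℕ)
    (I : Finset (Fin n)) (hI : I.card = i)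
    (φ : SchwartzMap (Fin n → ℝ) ℂ) :
    lap^[l + 1] (fun y => ((∑ k, epsSet I k * (y k) ^ 2 : ℝ) : ℂ) * φ y) 0
      = 4 * ((l : ℂ) + 1) * (l : ℂ) *
          (∑ k, ((epsSet I k : ℝ) : ℂ) * lap^[l - 1] (pd k (pd k ⇑φ)) 0)
        + 2 * ((l : ℂ) + 1) * (2 * (i : ℂ) - (n : ℂ)) * lap^[l] ⇑φ 0 :=
  stmt6_general n l i I hI φ
end

section
/- Let l ≥ 0 be an integer and let g(z) = Σ_{j=0}^{⌊l/2⌋} a_j z^{l−2j} be a polynomial with complex coefficients (an element of Pol_l[z]_even). Then the following identities of polynomials in two variables s, t hold: (∂/∂s)(I_l g)(s, t) = (1/2)·(I_{l−2}((l−θ)g))(s, t) and (∂/∂t)(I_l g)(s, t) = (I_{l−1}(g'))(s, t), where g' = dg/dz and θ = z d/dz (note (l−θ)g ∈ Pol_{l−2}[z]_even and g' ∈ Pol_{l−1}[z]_even, and both sides are 0 in the degenerate cases l ≤ 1, resp. l = 0). -/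
/-- The inflation (I_l g)(s,t) = Σ_{j=0}^{⌊l/2⌋} a_j s^j t^{l−2j} of a polynomial
g(z) = Σ_j a_j z^{l−2j} ∈ Pol_l[z]_even, read off from the coefficients of `g`;
by convention `I_l g = 0` for `l < 0`. -/
noncomputable def inflate (l : ℤ) (g : Polynomial ℂ) (s t : ℂ) : ℂ :=
  if 0 ≤ l then
    ∑ j ∈ Finset.range (l.toNat / 2 + 1),
      g.coeff (l.toNat - 2 * j) * s ^ j * t ^ (l.toNat - 2 * j)
  else 0

/-!
`I_l g` only reads the coefficients `c_{l-2j}` of `g`, so both identities can be checked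
monomial by monomial. In `s`, the term `c_{l-2j} s^j t^{l-2j}`
differentiates to `j c_{l-2j} s^{j-1} t^{l-2j}`, and `(l - θ)` multiplies `z^{l-2j}` by `2j`.
In `t` it differentiates to `(l-2j) c_{l-2j} s^j t^{l-2j-1}`, and `(l-2j) c_{l-2j}` is the
coefficient of `z^{l-1-2j}` in `g'`; the extra term `j = l/2` for even `l` carries the factor `0`.
-/

open Polynomial Finset

theorem coeff_C_mul_sub_X_mul_derivative {R : Type*} [CommRing R] (c : R) (p : R[X]) (n : ℕ) :
    (C c * p - X * derivative p).coeff n = (c - n) * p.coeff n := by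
  rw [coeff_sub, coeff_C_mul]
  cases n with
  | zero => simp
  | succ m =>
    rw [coeff_X_mul, coeff_derivative]
    push_cast
    ring

/-- `(l + 2 - m) / 2` vanishes exactly when `l - m < 0`, matching the convention `I_{l-m} = 0`. -/
theorem inflate_natCast_sub (l m : ℕ) (p : ℂ[X]) (s t : ℂ) :
    inflate ((l : ℤ) - m) p s t
      = ∑ k ∈ range ((l + 2 - m) / 2), p.coeff (l - m - 2 * k) * s ^ k * t ^ (l - m - 2 * k) := by
  by_cases h : m ≤ l
  · rw [inflate, if_pos (by omega), show ((l : ℤ) - m).toNat = l - m by omega,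
      show (l + 2 - m) / 2 = (l - m) / 2 + 1 by omega]
  · rw [inflate, if_neg (by omega), show (l + 2 - m) / 2 = 0 by omega, sum_range_zero]

theorem inflate_natCast (l : ℕ) (p : ℂ[X]) (s t : ℂ) :
    inflate l p s t = ∑ j ∈ range (l / 2 + 1), p.coeff (l - 2 * j) * s ^ j * t ^ (l - 2 * j) := by
  simpa [Nat.add_div_right] using inflate_natCast_sub l 0 p s t

theorem hasDerivAt_inflate_fst (l : ℕ) (p : ℂ[X]) (s t : ℂ) :
    HasDerivAt (fun s => inflate l p s t)
      ((1 / 2) * inflate (l - 2) (C (l : ℂ) * p - X * derivative p) s t) s := by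
  have hsplit : (fun s => inflate l p s t) = fun s =>
      (∑ k ∈ range (l / 2), p.coeff (l - 2 * (k + 1)) * s ^ (k + 1) * t ^ (l - 2 * (k + 1)))
        + p.coeff l * t ^ l := by
    funext s
    simp [inflate_natCast, sum_range_succ']
  rw [hsplit]
  refine ((HasDerivAt.fun_sum fun k _ =>
    ((hasDerivAt_pow (k + 1) s).const_mul _).mul_const _).add_const _).congr_deriv ?_
  rw [show (l : ℤ) - 2 = l - (2 : ℕ) by norm_num, inflate_natCast_sub, Nat.add_sub_cancel,
    mul_sum]
  refine sum_congr rfl fun k hk => ?_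
  have h2k : 2 * (k + 1) ≤ l := by rw [mem_range] at hk; omega
  rw [coeff_C_mul_sub_X_mul_derivative, show l - 2 - 2 * k = l - 2 * (k + 1) by omega,
    Nat.cast_sub h2k]
  push_cast
  ring

theorem hasDerivAt_inflate_snd (l : ℕ) (p : ℂ[X]) (s t : ℂ) :
    HasDerivAt (fun t => inflate l p s t) (inflate (l - 1) (derivative p) s t) t := by
  simp only [inflate_natCast]
  refine (HasDerivAt.fun_sum fun j _ =>
    (hasDerivAt_pow (l - 2 * j) t).const_mul (p.coeff (l - 2 * j) * s ^ j)).congr_deriv ?_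
  rw [show (l : ℤ) - 1 = l - (1 : ℕ) by norm_num, inflate_natCast_sub]
  symm
  refine sum_subset_zero_on_sdiff (range_subset_range.mpr (by omega)) (fun j hj => ?_)
    (fun k hk => ?_)
  · have hj : l - 2 * j = 0 := by simp only [mem_sdiff, mem_range] at hj; omega
    simp [hj]
  · have h2k : 2 * k < l := by rw [mem_range] at hk; omega
    rw [coeff_derivative, ← Nat.cast_add_one, show l - 1 - 2 * k + 1 = l - 2 * k by omega,
      show l - 1 - 2 * k = l - 2 * k - 1 by omega]
    ring

theorem stmt7_general (l : ℕ) (g : Polynomial ℂ) :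
    (∀ s t : ℂ, deriv (fun s' => inflate (l : ℤ) g s' t) s
        = (1 / 2) * inflate ((l : ℤ) - 2)
            (Polynomial.C (l : ℂ) * g - Polynomial.X * Polynomial.derivative g) s t)
    ∧ ∀ s t : ℂ, deriv (fun t' => inflate (l : ℤ) g s t') t
        = inflate ((l : ℤ) - 1) (Polynomial.derivative g) s t :=
  ⟨fun s t => (hasDerivAt_inflate_fst l g s t).deriv,
    fun s t => (hasDerivAt_inflate_snd l g s t).deriv⟩

/-- For g ∈ Pol_l[z]_even:  ∂/∂s (I_l g) = (1/2)·I_{l−2}((l−θ)g) and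
∂/∂t (I_l g) = I_{l−1}(g'), where θ = z d/dz. -/
theorem stmt7 (l : ℕ) (a : ℕ → ℂ) (g : Polynomial ℂ)
    (hg : g = ∑ j ∈ Finset.range (l / 2 + 1), Polynomial.C (a j) * Polynomial.X ^ (l - 2 * j)) :
    (∀ s t : ℂ, deriv (fun s' => inflate (l : ℤ) g s' t) s
        = (1 / 2) * inflate ((l : ℤ) - 2)
            (Polynomial.C (l : ℂ) * g - Polynomial.X * Polynomial.derivative g) s t)
    ∧ ∀ s t : ℂ, deriv (fun t' => inflate (l : ℤ) g s t') t
        = inflate ((l : ℤ) - 1) (Polynomial.derivative g) s t :=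
  stmt7_general l g
end
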